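/- Termination of the constraint resolution algorithm: for every finite constraint set C, the constraint resolution algorithm (given by the rewrite rules (1)–(14) of Figure 5, interleaved with the failure rules of Figure 4) halts, either by failing or by returning a substitution. -/
import Mathlib


/-! The constraint resolution algorithm of the paper (Figures 4 and 5):
constraint sets are finite sets of equality (`=_s`) and subtyping (`<:_s`)
constraints between types; the algorithm rewrites pairs (constraint set,
accumulated substitution) using rules (1)-(14). -/

inductive Ty (S F V : Type) where
  | tvar : V → Ty S F V
  | sort : S → Option F → Ty S F V
  | wt : Ty S F V
deriving DecidableEq

inductive Constr (S F V : Type) where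
  | eq : Ty S F V → Ty S F V → Constr S F V
  | sub : Ty S F V → Ty S F V → Constr S F V
deriving DecidableEq

variable {S F V : Type} [DecidableEq S] [DecidableEq F] [DecidableEq V]

/-- The singleton substitution `[α ↦ τ]`. -/
def sub1 (a : V) (τ : Ty S F V) : V → Ty S F V :=
  fun v => if v = a then τ else .tvar v

def applyTy (σ : V → Ty S F V) : Ty S F V → Ty S F V
  | .tvar a => σ a
  | .sort s g => .sort s g
  | .wt => .wt

def mapC (σ : V → Ty S F V) : Constr S F V → Constr S F V
  | .eq t1 t2 => .eq (applyTy σ t1) (applyTy σ t2)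
  | .sub t1 t2 => .sub (applyTy σ t1) (applyTy σ t2)

/-- Composition of substitutions. -/
def comp (σ1 σ2 : V → Ty S F V) : V → Ty S F V :=
  fun v => applyTy σ1 (σ2 v)

/-- `α` occurs in the constraint `c` (types are flat, so occurrence is being
one of the two sides). -/
def occursC (a : V) : Constr S F V → Prop
  | .eq t1 t2 => t1 = .tvar a ∨ t2 = .tvar a
  | .sub t1 t2 => t1 = .tvar a ∨ t2 = .tvar a

def Constr.isSub : Constr S F V → Bool
  | .sub _ _ => true
  | _ => false

/-- A state of the algorithm: the current constraint set and the accumulated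
substitution. -/
abbrev RState (S F V : Type) := Finset (Constr S F V) × (V → Ty S F V)

/-- One step of the constraint resolution algorithm (rules (1)-(14) of
Figure 5), parameterized by the decorated-sort subtyping relation `ds`
declared by the context `Γ` (its reflexive-transitive closure). -/
inductive Step (ds : Ty S F V → Ty S F V → Prop) :
    RState S F V → RState S F V → Prop where
  | r1 {τ C' σ} : Constr.eq τ τ ∉ C' →
      Step ds (insert (.eq τ τ) C', σ) (C', σ)
  | r2 {τ C' σ} : Constr.sub τ τ ∉ C' →
      Step ds (insert (.sub τ τ) C', σ) (C', σ)
  | r3 {s1 g1 s2 g2 C' σ} :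
      Constr.sub (.sort s1 g1) (.sort s2 g2) ∉ C' →
      ds (.sort s1 g1) (.sort s2 g2) →
      Step ds (insert (.sub (.sort s1 g1) (.sort s2 g2)) C', σ) (C', σ)
  | r4 {a τ C' σ} : Constr.eq (.tvar a) τ ∉ C' →
      Step ds (insert (.eq (.tvar a) τ) C', σ)
        (C'.image (mapC (sub1 a τ)), comp (sub1 a τ) σ)
  | r5 {a τ C' σ} : Constr.eq τ (.tvar a) ∉ C' →
      Step ds (insert (.eq τ (.tvar a)) C', σ)
        (C'.image (mapC (sub1 a τ)), comp (sub1 a τ) σ)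
  | r6 {s1 g1 s2 g2 s a C' σ} :
      Constr.sub (.sort s1 g1) (.tvar a) ≠ Constr.sub (.sort s2 g2) (.tvar a) →
      Constr.sub (.sort s1 g1) (.tvar a) ∉ C' →
      Constr.sub (.sort s2 g2) (.tvar a) ∉ C' →
      ds (.sort s1 g1) (.sort s none) → ds (.sort s2 g2) (.sort s none) →
      Step ds
        (insert (.sub (.sort s1 g1) (.tvar a))
          (insert (.sub (.sort s2 g2) (.tvar a)) C'), σ)
        (insert (.sub (.sort s none) (.tvar a)) C', σ)
  | r7a {s1 g1 s2 g2 a C' σ} :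
      Constr.sub (.tvar a) (.sort s1 g1) ≠ Constr.sub (.tvar a) (.sort s2 g2) →
      Constr.sub (.tvar a) (.sort s1 g1) ∉ C' →
      Constr.sub (.tvar a) (.sort s2 g2) ∉ C' →
      ds (.sort s1 g1) (.sort s2 g2) →
      Step ds
        (insert (.sub (.tvar a) (.sort s1 g1))
          (insert (.sub (.tvar a) (.sort s2 g2)) C'), σ)
        (insert (.sub (.tvar a) (.sort s1 g1)) C', σ)
  | r7b {s1 g1 s2 g2 a C' σ} :
      Constr.sub (.tvar a) (.sort s1 g1) ≠ Constr.sub (.tvar a) (.sort s2 g2) →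
      Constr.sub (.tvar a) (.sort s1 g1) ∉ C' →
      Constr.sub (.tvar a) (.sort s2 g2) ∉ C' →
      ds (.sort s2 g2) (.sort s1 g1) →
      Step ds
        (insert (.sub (.tvar a) (.sort s1 g1))
          (insert (.sub (.tvar a) (.sort s2 g2)) C'), σ)
        (insert (.sub (.tvar a) (.sort s2 g2)) C', σ)
  | r8 {τ1 τ2 C' σ} :
      Constr.sub τ1 τ2 ≠ Constr.sub τ2 τ1 →
      Constr.sub τ1 τ2 ∉ C' → Constr.sub τ2 τ1 ∉ C' →
      Step ds (insert (.sub τ1 τ2) (insert (.sub τ2 τ1) C'), σ)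
        (insert (.eq τ1 τ2) C', σ)
  | r9 {a1 a a2 C' σ} :
      Constr.sub (.tvar a1) (.tvar a) ≠ Constr.sub (.tvar a) (.tvar a2) →
      Constr.sub (.tvar a1) (.tvar a) ∉ C' →
      Constr.sub (.tvar a) (.tvar a2) ∉ C' →
      Step ds
        (insert (.sub (.tvar a1) (.tvar a))
          (insert (.sub (.tvar a) (.tvar a2)) C'), σ)
        (insert (.sub (.tvar a1) (.tvar a2))
          (C'.image (mapC (sub1 a (.tvar a2)))), comp (sub1 a (.tvar a2)) σ)
  | r10 {s g a a1 C' σ} :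
      Constr.sub (.sort s g) (.tvar a) ≠ Constr.sub (.tvar a) (.tvar a1) →
      Constr.sub (.sort s g) (.tvar a) ∉ C' →
      Constr.sub (.tvar a) (.tvar a1) ∉ C' →
      Step ds
        (insert (.sub (.sort s g) (.tvar a))
          (insert (.sub (.tvar a) (.tvar a1)) C'), σ)
        (insert (.sub (.sort s g) (.tvar a1))
          (C'.image (mapC (sub1 a (.tvar a1)))), comp (sub1 a (.tvar a1)) σ)
  | r11 {a1 a s g C' σ} :
      Constr.sub (.tvar a1) (.tvar a) ≠ Constr.sub (.tvar a) (.sort s g) →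
      Constr.sub (.tvar a1) (.tvar a) ∉ C' →
      Constr.sub (.tvar a) (.sort s g) ∉ C' →
      Step ds
        (insert (.sub (.tvar a1) (.tvar a))
          (insert (.sub (.tvar a) (.sort s g)) C'), σ)
        (insert (.sub (.tvar a1) (.sort s g))
          (C'.image (mapC (sub1 a (.tvar a1)))), comp (sub1 a (.tvar a1)) σ)
  | r12 {s1 g1 a s2 g2 C' σ} :
      Constr.sub (.sort s1 g1) (.tvar a) ≠ Constr.sub (.tvar a) (.sort s2 g2) →
      Constr.sub (.sort s1 g1) (.tvar a) ∉ C' →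
      Constr.sub (.tvar a) (.sort s2 g2) ∉ C' →
      ds (.sort s1 g1) (.sort s2 g2) →
      Step ds
        (insert (.sub (.sort s1 g1) (.tvar a))
          (insert (.sub (.tvar a) (.sort s2 g2)) C'), σ)
        (C'.image (mapC (sub1 a (.sort s2 g2))), comp (sub1 a (.sort s2 g2)) σ)
  | r13 {a τ C' σ} :
      Constr.sub (.tvar a) τ ∉ C' →
      (∀ c ∈ C', ¬ occursC a c) →
      Step ds (insert (.sub (.tvar a) τ) C', σ) (C', comp (sub1 a τ) σ)
  | r14 {a τ C' σ} :
      Constr.sub τ (.tvar a) ∉ C' →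
      (∀ c ∈ C', ¬ occursC a c) →
      Step ds (insert (.sub τ (.tvar a)) C', σ) (C', comp (sub1 a τ) σ)

/-- The degree of a state: the number of constraints in `C` together with
the number of subtyping constraints in `C`. -/
def degree (st : RState S F V) : ℕ × ℕ :=
  (st.1.card, (st.1.filter fun c => c.isSub = true).card)


private lemma card_insert2 {α : Type*} [DecidableEq α] {a b : α} {s : Finset α}
    (hne : a ≠ b) (h1 : a ∉ s) (h2 : b ∉ s) :
    (insert a (insert b s)).card = s.card + 2 := by
  rw [Finset.card_insert_of_notMem (by simp [Finset.mem_insert, hne, h1]),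
    Finset.card_insert_of_notMem h2]

private lemma step_card {ds : Ty S F V → Ty S F V → Prop} {st st' : RState S F V}
    (h : Step ds st st') : st'.1.card < st.1.card := by
  have him : ∀ (f : V → Ty S F V) (C : Finset (Constr S F V)),
      (C.image (mapC f)).card ≤ C.card := fun f C => Finset.card_image_le
  cases h with
  | r1 h1 => simp [Finset.card_insert_of_notMem h1]
  | r2 h1 => simp [Finset.card_insert_of_notMem h1]
  | r3 h1 _ => simp [Finset.card_insert_of_notMem h1]
  | r4 h1 =>
      simp only [Finset.card_insert_of_notMem h1]
      exact Nat.lt_succ_of_le (him _ _)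
  | r5 h1 =>
      simp only [Finset.card_insert_of_notMem h1]
      exact Nat.lt_succ_of_le (him _ _)
  | r6 hne h1 h2 _ _ =>
      have e := card_insert2 hne h1 h2
      rw [e]
      exact lt_of_le_of_lt (Finset.card_insert_le _ _) (by omega)
  | r7a hne h1 h2 _ =>
      have e := card_insert2 hne h1 h2
      rw [e]
      exact lt_of_le_of_lt (Finset.card_insert_le _ _) (by omega)
  | r7b hne h1 h2 _ =>
      have e := card_insert2 hne h1 h2
      rw [e]
      exact lt_of_le_of_lt (Finset.card_insert_le _ _) (by omega)
  | r8 hne h1 h2 =>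
      have e := card_insert2 hne h1 h2
      rw [e]
      exact lt_of_le_of_lt (Finset.card_insert_le _ _) (by omega)
  | r9 hne h1 h2 =>
      rename_i x1 x2 a1 a a2 C' σ
      have hne' : (Constr.sub (Ty.tvar a1) (Ty.tvar a) : Constr S F V) ≠
          Constr.sub (Ty.tvar a) (Ty.tvar a2) := by
        intro h
        apply hne
        injection h with e1 e2
        injection e1 with e1
        injection e2 with e2
        subst e1; subst e2; rfl
      have e := card_insert2 hne' h1 h2
      rw [e]
      exact lt_of_le_of_lt (le_trans (Finset.card_insert_le _ _)
        (Nat.succ_le_succ (him _ _))) (by omega)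
  | r10 hne h1 h2 =>
      have e := card_insert2 hne h1 h2
      rw [e]
      exact lt_of_le_of_lt (le_trans (Finset.card_insert_le _ _)
        (Nat.succ_le_succ (him _ _))) (by omega)
  | r11 hne h1 h2 =>
      have e := card_insert2 hne h1 h2
      rw [e]
      exact lt_of_le_of_lt (le_trans (Finset.card_insert_le _ _)
        (Nat.succ_le_succ (him _ _))) (by omega)
  | r12 hne h1 h2 _ =>
      have e := card_insert2 hne h1 h2
      rw [e]
      exact lt_of_le_of_lt (him _ _) (by omega)
  | r13 h1 _ => simp [Finset.card_insert_of_notMem h1]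
  | r14 h1 _ => simp [Finset.card_insert_of_notMem h1]

/-- Termination of the constraint resolution algorithm: for every (finite)
constraint set and accumulated substitution, the algorithm given by the
rewrite rules (1)-(14), interleaved with the failure rules, halts: there is
no infinite sequence of rule applications, i.e. the inverse of the step
relation is well-founded, so every run ends either by failing or by
returning a substitution. -/
theorem resolution_terminates (ds : Ty S F V → Ty S F V → Prop) :
    WellFounded (fun st' st : RState S F V => Step ds st st') := by
  have hwf : WellFounded (fun st' st : RState S F V => st'.1.card < st.1.card) :=
    InvImage.wf (fun st : RState S F V => st.1.card) Nat.lt_wfRel.wf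
  exact Subrelation.wf (fun h => step_card h) hwf
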